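/- arXiv:1911.05171 — 4 statements merged into one kernel-verified Lean document; each statement's English description precedes it below -/
import Mathlib

section
/- In the MPL model, fix t ∈ {1,…,n−1} and consider an agent whose true certainty equivalent is exactly x_t. Then Payoff(x_t, t) = u_{x_t}(x_t), and Payoff(x_t, t+1) > Payoff(x_t, t). In particular the report function satisfies r(x_t) ≠ x_t. -/
/-! At `c = x t` stopping at round `t` pays `u c c` for sure, whereas stopping at round `t + 1`
pays, with probability `p (t + 1) > 0`, the strictly better prize `x (t + 1)` instead. So `t`
is not the strict maximizer, and the grid `x` is injective. -/

open Set

lemma strictMono_of_eq_add_mul {x : ℕ → ℝ} {a ℓ : ℝ} (hℓ : 0 < ℓ)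
    (hx : ∀ k : ℕ, x k = a + k * ℓ) : StrictMono x := by
  intro i j hij
  rw [hx, hx]
  gcongr

lemma lt_mul_add_one_sub_mul {p a b : ℝ} (hp : 0 < p) (hab : a < b) :
    a < p * b + (1 - p) * a := by
  nlinarith

lemma argmax_ne_of_lt {α β : Type*} [Preorder β] {f : α → β} {S : Finset α} {m s t : α}
    (hmax : ∀ s ∈ S, s ≠ m → f s < f m) (hs : s ∈ S) (hts : f t < f s) : m ≠ t := by
  rintro rfl
  by_cases hsm : s = m
  · exact lt_irrefl _ (hsm ▸ hts)
  · exact lt_asymm (hmax s hs hsm) hts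

theorem stmt_2_general
    (xlo xhi : ℝ) (hlohi : xlo < xhi) (n : ℕ)
    (ℓ : ℝ) (hℓ : ℓ = (xhi - xlo) / n)
    (x : ℕ → ℝ) (hxk : ∀ k : ℕ, x k = xlo + k * ℓ)
    (u : ℝ → ℝ → ℝ)
    (hu : ∀ c ∈ Set.Ioo xlo xhi, StrictMonoOn (u c) (Set.Icc xlo xhi))
    (p : ℕ → ℝ) (hp : ∀ t ∈ Finset.Icc 1 n, 0 < p t ∧ p t ≤ 1)
    (Payoff : ℝ → ℕ → ℝ)
    (hPayoff : ∀ c t, Payoff c t = p t * u c (x t) + (1 - p t) * u c c)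
    (r : ℝ → ℕ)
    (hr_max : ∀ c ∈ Set.Ioo xlo xhi, ∀ t ∈ Finset.Icc 1 n, t ≠ r c →
      Payoff c t < Payoff c (r c))
    (t : ℕ) (ht1 : 1 ≤ t) (ht2 : t ≤ n - 1) :
    Payoff (x t) t = u (x t) (x t) ∧
    Payoff (x t) t < Payoff (x t) (t + 1) ∧
    x (r (x t)) ≠ x t := by
  have hn : (0 : ℝ) < n := by exact_mod_cast (show 0 < n by omega)
  have hx_mono : StrictMono x :=
    strictMono_of_eq_add_mul (hℓ ▸ div_pos (sub_pos.2 hlohi) hn) hxk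
  have hx0 : x 0 = xlo := by simp [hxk]
  have hxn : x n = xhi := by rw [hxk, hℓ]; field_simp; ring
  have hxt : x t ∈ Ioo xlo xhi :=
    hx0 ▸ hxn ▸ ⟨hx_mono (by omega), hx_mono (by omega)⟩
  have hxt1 : x (t + 1) ∈ Icc xlo xhi :=
    hx0 ▸ hxn ▸ ⟨hx_mono.monotone (by omega), hx_mono.monotone (by omega)⟩
  have ht1_mem : t + 1 ∈ Finset.Icc 1 n := Finset.mem_Icc.2 ⟨by omega, by omega⟩
  have hpay_self : Payoff (x t) t = u (x t) (x t) := by rw [hPayoff]; ring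
  have hpay_next : Payoff (x t) t < Payoff (x t) (t + 1) := by
    rw [hpay_self, hPayoff]
    exact lt_mul_add_one_sub_mul (hp _ ht1_mem).1
      (hu _ hxt (Ioo_subset_Icc_self hxt) hxt1 (hx_mono t.lt_succ_self))
  exact ⟨hpay_self, hpay_next,
    hx_mono.injective.ne (argmax_ne_of_lt (hr_max _ hxt) ht1_mem hpay_next)⟩

/-- MPL model: with discretization `x k = x̲ + k·ℓ`, `ℓ = (x̄ − x̲)/n`, strictly
increasing utilities `u c`, stopping probabilities `p t ∈ (0,1]`, payoff
`Payoff c t = p t · u c (x t) + (1 − p t) · u c c`, and report function `r c`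
the unique strict maximizer of `t ↦ Payoff c t` over `{1,…,n}`:
for `t ∈ {1,…,n−1}`, an agent with true certainty equivalent `x t` has
`Payoff (x t) t = u (x t) (x t)` and `Payoff (x t) (t+1) > Payoff (x t) t`;
in particular `r (x t) ≠ x t`. -/
theorem stmt_2
    (xlo xhi : ℝ) (hlohi : xlo < xhi) (n : ℕ) (hn : 2 ≤ n)
    (ℓ : ℝ) (hℓ : ℓ = (xhi - xlo) / n)
    (x : ℕ → ℝ) (hxk : ∀ k : ℕ, x k = xlo + k * ℓ)
    (u : ℝ → ℝ → ℝ)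
    (hu : ∀ c ∈ Set.Ioo xlo xhi, StrictMonoOn (u c) (Set.Icc xlo xhi))
    (p : ℕ → ℝ) (hp : ∀ t ∈ Finset.Icc 1 n, 0 < p t ∧ p t ≤ 1)
    (Payoff : ℝ → ℕ → ℝ)
    (hPayoff : ∀ c t, Payoff c t = p t * u c (x t) + (1 - p t) * u c c)
    (r : ℝ → ℕ)
    (hr_mem : ∀ c ∈ Set.Ioo xlo xhi, r c ∈ Finset.Icc 1 n)
    (hr_max : ∀ c ∈ Set.Ioo xlo xhi, ∀ t ∈ Finset.Icc 1 n, t ≠ r c →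
      Payoff c t < Payoff c (r c))
    (t : ℕ) (ht1 : 1 ≤ t) (ht2 : t ≤ n - 1) :
    Payoff (x t) t = u (x t) (x t) ∧
    Payoff (x t) t < Payoff (x t) (t + 1) ∧
    x (r (x t)) ≠ x t :=
  stmt_2_general xlo xhi hlohi n ℓ hℓ x hxk u hu p hp Payoff hPayoff r hr_max t ht1 ht2
end

section
/- In the MPL model, assume: (i) inverse Lipschitz condition: there is K > 0 such that |u_c(x) − u_c(y)| > K·|x − y| for every certainty equivalent c and all x ≠ y in [x̲, x̄]; (ii) there is M > 0 with u_c(x̄) − u_c(x̲) ≤ M for every c; (iii) the stopping probabilities satisfy p_{t+1} < p_t and p_{t+1} < (K·ℓ/(2M))·p_t for all t; (iv) every agent reports above his true certainty equivalent, i.e. r(c) > c for all c. Then r is injective on {x_1,…,x_{n−1}}: if t₁, t₂ ∈ {1,…,n−1} and r(x_{t₁}) = r(x_{t₂}), then t₁ = t₂. -/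
/-!
An agent whose certainty equivalent is the grid point `x t` gains more than `K ℓ` by stopping at
round `t + 1` (inverse Lipschitz condition) and at most `M` at any later round `s`, while
`p s ≤ p (t + 2) < (K ℓ / (2 M)) p (t + 1)`. So round `t + 1` beats every later round, and as the
agent reports above `x t`, he reports `x (t + 1)`. Distinct grid points thus get distinct reports.
-/

open Set

lemma strictMono_add_mul {a h : ℝ} (hh : 0 < h) : StrictMono fun k : ℕ => a + k * h :=
  fun _ _ hij => by simp only; gcongr

lemma add_mul_div_mem_Icc {a b : ℝ} {n k : ℕ} (hab : a ≤ b) (hk : k ≤ n) :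
    a + k * ((b - a) / n) ∈ Icc a b := by
  have hba : 0 ≤ (b - a) / n := div_nonneg (sub_nonneg.2 hab) n.cast_nonneg
  refine ⟨le_add_of_nonneg_right (by positivity), ?_⟩
  rcases n.eq_zero_or_pos with rfl | hn
  · simpa using hab
  calc a + k * ((b - a) / n) ≤ a + n * ((b - a) / n) := by gcongr
    _ = b := by field_simp; ring

lemma add_mul_div_mem_Ioo {a b : ℝ} {n k : ℕ} (hab : a < b) (hk₀ : 0 < k) (hkn : k < n) :
    a + k * ((b - a) / n) ∈ Ioo a b := by
  have hn : (0 : ℝ) < n := by exact_mod_cast hk₀.trans hkn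
  have hmono := strictMono_add_mul (a := a) (div_pos (sub_pos.2 hab) hn)
  refine ⟨by simpa using hmono hk₀, ?_⟩
  convert hmono hkn using 1
  field_simp; ring

lemma MonotoneOn.sub_le_sub_of_mem_Icc {f : ℝ → ℝ} {a b y z : ℝ} (hf : MonotoneOn f (Icc a b))
    (hy : y ∈ Icc a b) (hz : z ∈ Icc a b) : f y - f z ≤ f b - f a := by
  have hb : f y ≤ f b := hf hy (right_mem_Icc.2 (hy.1.trans hy.2)) hy.2
  have ha : f a ≤ f z := hf (left_mem_Icc.2 (hz.1.trans hz.2)) hz hz.1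
  linarith

lemma mul_lt_mul_of_lt_div_mul {a M g₁ gₛ p₁ pₛ : ℝ} (hM : 0 < M) (ha : 0 ≤ a) (hp₁ : 0 < p₁)
    (hpₛ : 0 ≤ pₛ) (hg₁ : a < g₁) (hgₛ : gₛ ≤ M) (hratio : pₛ < a / (2 * M) * p₁) :
    pₛ * gₛ < p₁ * g₁ :=
  calc pₛ * gₛ ≤ pₛ * M := mul_le_mul_of_nonneg_left hgₛ hpₛ
    _ < a / (2 * M) * p₁ * M := mul_lt_mul_of_pos_right hratio hM
    _ = p₁ * (a / 2) := by field_simp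
    _ ≤ p₁ * a := by gcongr; linarith
    _ < p₁ * g₁ := mul_lt_mul_of_pos_left hg₁ hp₁

lemma eq_succ_of_forall_mul_lt {p g : ℕ → ℝ} {a M : ℝ} {n t s : ℕ} (hM : 0 < M) (ha : 0 ≤ a)
    (hp : ∀ j ∈ Icc 1 n, 0 < p j) (hp_anti : AntitoneOn p (Icc 1 n))
    (hratio : t + 2 ≤ n → p (t + 2) < a / (2 * M) * p (t + 1)) (hnext : a < g (t + 1))
    (hgs : g s ≤ M)
    (hmax : ∀ j ∈ Icc 1 n, j ≠ s → p j * g j < p s * g s) (hts : t < s) (hsn : s ≤ n) :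
    s = t + 1 := by
  by_contra hne
  have hs : s ∈ Icc 1 n := ⟨by omega, hsn⟩
  have hps : p s ≤ p (t + 2) := hp_anti ⟨by omega, by omega⟩ hs (by omega)
  exact (hmax (t + 1) ⟨by omega, by omega⟩ (Ne.symm hne)).not_gt <|
    mul_lt_mul_of_lt_div_mul hM ha (hp _ ⟨by omega, by omega⟩) (hp s hs).le hnext hgs
      (hps.trans_lt (hratio (by omega)))

theorem stmt_3_general
    (xlo xhi : ℝ) (hlohi : xlo < xhi) (n : ℕ)
    (ℓ : ℝ) (hℓ : ℓ = (xhi - xlo) / n)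
    (x : ℕ → ℝ) (hxk : ∀ k : ℕ, x k = xlo + k * ℓ)
    (u : ℝ → ℝ → ℝ)
    (hu : ∀ c ∈ Set.Ioo xlo xhi, StrictMonoOn (u c) (Set.Icc xlo xhi))
    (p : ℕ → ℝ) (hp : ∀ t ∈ Finset.Icc 1 n, 0 < p t ∧ p t ≤ 1)
    (Payoff : ℝ → ℕ → ℝ)
    (hPayoff : ∀ c t, Payoff c t = p t * u c (x t) + (1 - p t) * u c c)
    (r : ℝ → ℕ)
    (hr_mem : ∀ c ∈ Set.Ioo xlo xhi, r c ∈ Finset.Icc 1 n)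
    (hr_max : ∀ c ∈ Set.Ioo xlo xhi, ∀ t ∈ Finset.Icc 1 n, t ≠ r c →
      Payoff c t < Payoff c (r c))
    (K : ℝ) (hK : 0 < K)
    (hinvLip : ∀ c ∈ Set.Ioo xlo xhi, ∀ y ∈ Set.Icc xlo xhi, ∀ z ∈ Set.Icc xlo xhi,
      y ≠ z → K * |y - z| < |u c y - u c z|)
    (M : ℝ) (hM : 0 < M)
    (hMb : ∀ c ∈ Set.Ioo xlo xhi, u c xhi - u c xlo ≤ M)
    (hpdec : ∀ t : ℕ, 1 ≤ t → t ≤ n - 1 → p (t + 1) < p t)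
    (hpratio : ∀ t : ℕ, 1 ≤ t → t ≤ n - 1 → p (t + 1) < (K * ℓ / (2 * M)) * p t)
    (hhigh : ∀ c ∈ Set.Ioo xlo xhi, c < x (r c)) :
    ∀ t₁ ∈ Finset.Icc 1 (n - 1), ∀ t₂ ∈ Finset.Icc 1 (n - 1),
      r (x t₁) = r (x t₂) → t₁ = t₂ := by
  simp only [Finset.mem_Icc] at hp hr_mem hr_max ⊢
  rintro t₁ ht₁ t₂ ht₂ hr
  have hℓ_pos : 0 < ℓ := hℓ ▸ div_pos (sub_pos.2 hlohi) (by norm_cast; omega)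
  have hx : StrictMono x := by simpa only [← hxk] using strictMono_add_mul (a := xlo) hℓ_pos
  have hx_Icc : ∀ k ≤ n, x k ∈ Icc xlo xhi := fun k hk => by
    rw [hxk, hℓ]; exact add_mul_div_mem_Icc hlohi.le hk
  have hp_anti : AntitoneOn p (Icc 1 n) :=
    (strictAntiOn_of_add_one_lt ordConnected_Icc fun t _ ht ht' =>
      hpdec t ht.1 (by have := ht'.2; omega)).antitoneOn
  have hreport : ∀ t, 1 ≤ t ∧ t ≤ n - 1 → r (x t) = t + 1 := by
    rintro t ⟨ht1, htn⟩
    have hc : x t ∈ Ioo xlo xhi := by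
      rw [hxk, hℓ]; exact add_mul_div_mem_Ioo hlohi (by omega) (by omega)
    have hs := hr_mem _ hc
    have hstep : x (t + 1) - x t = ℓ := by simp only [hxk]; push_cast; ring
    have hnext : K * ℓ < u (x t) (x (t + 1)) - u (x t) (x t) := by
      have h := hinvLip _ hc _ (hx_Icc (t + 1) (by omega)) _ (hx_Icc t (by omega))
        (hx.injective.ne (by omega))
      rwa [hstep, abs_of_pos hℓ_pos, abs_of_pos] at h
      exact sub_pos.2 (hu _ hc (hx_Icc t (by omega)) (hx_Icc (t + 1) (by omega)) (hx (by omega)))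
    refine eq_succ_of_forall_mul_lt (g := fun j => u (x t) (x j) - u (x t) (x t)) hM
      (by positivity) (fun j hj => (hp j hj).1) hp_anti
      (fun _ => hpratio (t + 1) (by omega) (by omega)) hnext ?_ ?_
      (hx.lt_iff_lt.1 (hhigh _ hc)) hs.2
    · exact ((hu _ hc).monotoneOn.sub_le_sub_of_mem_Icc (hx_Icc _ hs.2)
        (hx_Icc t (by omega))).trans (hMb _ hc)
    · intro j hj hne
      have := hr_max _ hc j hj hne
      simp only [hPayoff] at this
      linarith
  rw [hreport t₁ ht₁, hreport t₂ ht₂] at hr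
  omega

/-- MPL model, injectivity of the report function on the grid: assuming
(i) an inverse Lipschitz condition with constant `K > 0` for all utilities,
(ii) a uniform bound `M > 0` on `u c x̄ − u c x̲`,
(iii) `p (t+1) < p t` and `p (t+1) < (K·ℓ/(2M))·p t` for all `t`, and
(iv) every agent reports above his true certainty equivalent,
then `r` is injective on `{x 1, …, x (n−1)}`. -/
theorem stmt_3
    (xlo xhi : ℝ) (hlohi : xlo < xhi) (n : ℕ) (hn : 2 ≤ n)
    (ℓ : ℝ) (hℓ : ℓ = (xhi - xlo) / n)
    (x : ℕ → ℝ) (hxk : ∀ k : ℕ, x k = xlo + k * ℓ)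
    (u : ℝ → ℝ → ℝ)
    (hu : ∀ c ∈ Set.Ioo xlo xhi, StrictMonoOn (u c) (Set.Icc xlo xhi))
    (p : ℕ → ℝ) (hp : ∀ t ∈ Finset.Icc 1 n, 0 < p t ∧ p t ≤ 1)
    (Payoff : ℝ → ℕ → ℝ)
    (hPayoff : ∀ c t, Payoff c t = p t * u c (x t) + (1 - p t) * u c c)
    (r : ℝ → ℕ)
    (hr_mem : ∀ c ∈ Set.Ioo xlo xhi, r c ∈ Finset.Icc 1 n)
    (hr_max : ∀ c ∈ Set.Ioo xlo xhi, ∀ t ∈ Finset.Icc 1 n, t ≠ r c →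
      Payoff c t < Payoff c (r c))
    (K : ℝ) (hK : 0 < K)
    (hinvLip : ∀ c ∈ Set.Ioo xlo xhi, ∀ y ∈ Set.Icc xlo xhi, ∀ z ∈ Set.Icc xlo xhi,
      y ≠ z → K * |y - z| < |u c y - u c z|)
    (M : ℝ) (hM : 0 < M)
    (hMb : ∀ c ∈ Set.Ioo xlo xhi, u c xhi - u c xlo ≤ M)
    (hpdec : ∀ t : ℕ, 1 ≤ t → t ≤ n - 1 → p (t + 1) < p t)
    (hpratio : ∀ t : ℕ, 1 ≤ t → t ≤ n - 1 → p (t + 1) < (K * ℓ / (2 * M)) * p t)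
    (hhigh : ∀ c ∈ Set.Ioo xlo xhi, c < x (r c)) :
    ∀ t₁ ∈ Finset.Icc 1 (n - 1), ∀ t₂ ∈ Finset.Icc 1 (n - 1),
      r (x t₁) = r (x t₂) → t₁ = t₂ :=
  stmt_3_general xlo xhi hlohi n ℓ hℓ x hxk u hu p hp Payoff hPayoff r hr_mem hr_max K hK hinvLip M
    hM hMb hpdec hpratio hhigh
end

section
/- Let n ≥ 1 and let α, β, γ ∈ ℝⁿ be nonzero vectors. Then ⟨α, β/‖β‖⟩ > ⟨α, γ/‖γ‖⟩ if and only if ‖α/‖α‖ − β/‖β‖‖ < ‖α/‖α‖ − γ/‖γ‖‖. -/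
open scoped RealInnerProductSpace

-- For a unit vector `x`, `‖a - x‖² = ‖a‖² - 2⟪a, x⟫ + 1`.
theorem inner_lt_inner_iff_norm_sub_lt_norm_sub {E : Type*} [NormedAddCommGroup E]
    [InnerProductSpace ℝ E] (a : E) {b c : E} (hb : ‖b‖ = 1) (hc : ‖c‖ = 1) :
    ⟪a, c⟫ < ⟪a, b⟫ ↔ ‖a - b‖ < ‖a - c‖ := by
  rw [← pow_lt_pow_iff_left₀ (norm_nonneg _) (norm_nonneg _) two_ne_zero,
    norm_sub_sq_real, norm_sub_sq_real, hb, hc]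
  constructor <;> intro h <;> linarith

theorem inner_inv_norm_smul_lt_iff {E : Type*} [NormedAddCommGroup E] [InnerProductSpace ℝ E]
    {a : E} (ha : a ≠ 0) (x y : E) :
    ⟪‖a‖⁻¹ • a, x⟫ < ⟪‖a‖⁻¹ • a, y⟫ ↔ ⟪a, x⟫ < ⟪a, y⟫ := by
  rw [real_inner_smul_left, real_inner_smul_left,
    mul_lt_mul_iff_right₀ (inv_pos.mpr (norm_pos_iff.mpr ha))]

theorem stmt_10_general (n : ℕ) (α β γ : EuclideanSpace ℝ (Fin n))
    (hα : α ≠ 0) (hβ : β ≠ 0) (hγ : γ ≠ 0) :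
    ⟪α, ‖β‖⁻¹ • β⟫ > ⟪α, ‖γ‖⁻¹ • γ⟫ ↔
      ‖‖α‖⁻¹ • α - ‖β‖⁻¹ • β‖ < ‖‖α‖⁻¹ • α - ‖γ‖⁻¹ • γ‖ := by
  rw [gt_iff_lt, ← inner_inv_norm_smul_lt_iff hα]
  exact inner_lt_inner_iff_norm_sub_lt_norm_sub _ (norm_smul_inv_norm hβ) (norm_smul_inv_norm hγ)

/-- Effectiveness of the spherical scoring rule with respect to the renormalized
`L²` metric: for nonzero `α, β, γ ∈ ℝⁿ`,
`⟪α, β/‖β‖⟫ > ⟪α, γ/‖γ‖⟫` iff `‖α/‖α‖ − β/‖β‖‖ < ‖α/‖α‖ − γ/‖γ‖‖`. -/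
theorem stmt_10 (n : ℕ) (hn : 1 ≤ n) (α β γ : EuclideanSpace ℝ (Fin n))
    (hα : α ≠ 0) (hβ : β ≠ 0) (hγ : γ ≠ 0) :
    ⟪α, ‖β‖⁻¹ • β⟫ > ⟪α, ‖γ‖⁻¹ • γ⟫ ↔
      ‖‖α‖⁻¹ • α - ‖β‖⁻¹ • β‖ < ‖‖α‖⁻¹ • α - ‖γ‖⁻¹ • γ‖ :=
  stmt_10_general n α β γ hα hβ hγ
end

section
/- Let n ≥ 1, let α, β, α^h, β^h ∈ ℝⁿ be nonzero vectors, and let λ > 0. Suppose ‖α/‖α‖ − β/‖β‖‖ > 2λ, ‖α/‖α‖ − α^h/‖α^h‖‖ ≤ λ, and ‖β/‖β‖ − β^h/‖β^h‖‖ ≤ λ. Then ⟨α, α^h/‖α^h‖⟩ > ⟨α, β^h/‖β^h‖⟩. -/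
open scoped RealInnerProductSpace

/-!
Write `u, v, a, b` for the renormalizations of `α, β, αʰ, βʰ`. By the triangle inequality
`‖u - b‖ ≥ ‖u - v‖ - ‖v - b‖ > 2λ - λ ≥ ‖u - a‖`, so `a` is strictly closer to `u` than `b`.
For vectors of equal norm, `‖u - x‖² = ‖u‖² - 2⟪u, x⟫ + ‖x‖²` turns "closer to `u`" into
"larger inner product with `u`", and rescaling `u` by `‖α‖ > 0` gives the claim.
-/

lemma dist_lt_dist_of_two_mul_lt_dist {X : Type*} [PseudoMetricSpace X] {x y a b : X} {r : ℝ}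
    (hxy : 2 * r < dist x y) (ha : dist x a ≤ r) (hb : dist y b ≤ r) :
    dist x a < dist x b := by
  linarith [dist_triangle_right x y b]

section InnerProduct

variable {E : Type*} [NormedAddCommGroup E] [InnerProductSpace ℝ E]

lemma real_inner_lt_real_inner_iff_norm_sub_lt_of_norm_eq {u a b : E} (hab : ‖a‖ = ‖b‖) :
    ⟪u, b⟫ < ⟪u, a⟫ ↔ ‖u - a‖ < ‖u - b‖ := by
  rw [← sq_lt_sq₀ (norm_nonneg _) (norm_nonneg _), norm_sub_sq_real, norm_sub_sq_real, hab]
  constructor <;> intro h <;> linarith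

lemma real_inner_lt_real_inner_iff_of_normalize {α : E} (hα : α ≠ 0) {x y : E} :
    ⟪α, y⟫ < ⟪α, x⟫ ↔ ⟪‖α‖⁻¹ • α, y⟫ < ⟪‖α‖⁻¹ • α, x⟫ := by
  simp only [real_inner_smul_left]
  exact (mul_lt_mul_iff_right₀ (inv_pos.mpr (norm_pos_iff.mpr hα))).symm

end InnerProduct

theorem stmt_15_general (n : ℕ) (α β αh βh : EuclideanSpace ℝ (Fin n))
    (hα : α ≠ 0) (hαh : αh ≠ 0) (hβh : βh ≠ 0)
    (lam : ℝ)
    (hfar : ‖‖α‖⁻¹ • α - ‖β‖⁻¹ • β‖ > 2 * lam)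
    (hα_close : ‖‖α‖⁻¹ • α - ‖αh‖⁻¹ • αh‖ ≤ lam)
    (hβ_close : ‖‖β‖⁻¹ • β - ‖βh‖⁻¹ • βh‖ ≤ lam) :
    ⟪α, ‖αh‖⁻¹ • αh⟫ > ⟪α, ‖βh‖⁻¹ • βh⟫ := by
  have hnorm : ‖‖αh‖⁻¹ • αh‖ = ‖‖βh‖⁻¹ • βh‖ := by
    simp [norm_smul, hαh, hβh]
  rw [gt_iff_lt, real_inner_lt_real_inner_iff_of_normalize hα,
    real_inner_lt_real_inner_iff_norm_sub_lt_of_norm_eq hnorm]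
  simp only [← dist_eq_norm] at hfar hα_close hβ_close ⊢
  exact dist_lt_dist_of_two_mul_lt_dist hfar hα_close hβ_close

/-- A misreport whose renormalization is more than `2λ` from the truth yields a
strictly worse spherical score: for nonzero `α, β, αʰ, βʰ ∈ ℝⁿ` and `λ > 0`, if
`‖α/‖α‖ − β/‖β‖‖ > 2λ`, `‖α/‖α‖ − αʰ/‖αʰ‖‖ ≤ λ`, and `‖β/‖β‖ − βʰ/‖βʰ‖‖ ≤ λ`,
then `⟪α, αʰ/‖αʰ‖⟫ > ⟪α, βʰ/‖βʰ‖⟫`. -/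
theorem stmt_15 (n : ℕ) (hn : 1 ≤ n) (α β αh βh : EuclideanSpace ℝ (Fin n))
    (hα : α ≠ 0) (hβ : β ≠ 0) (hαh : αh ≠ 0) (hβh : βh ≠ 0)
    (lam : ℝ) (hlam : 0 < lam)
    (hfar : ‖‖α‖⁻¹ • α - ‖β‖⁻¹ • β‖ > 2 * lam)
    (hα_close : ‖‖α‖⁻¹ • α - ‖αh‖⁻¹ • αh‖ ≤ lam)
    (hβ_close : ‖‖β‖⁻¹ • β - ‖βh‖⁻¹ • βh‖ ≤ lam) :
    ⟪α, ‖αh‖⁻¹ • αh⟫ > ⟪α, ‖βh‖⁻¹ • βh⟫ :=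
  stmt_15_general n α β αh βh hα hαh hβh lam hfar hα_close hβ_close
end
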